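/- arXiv:2603.19208 — 2 statements merged into one kernel-verified Lean document; each statement's English description precedes it below -/
import Mathlib

section
/- Define the R-product of real matrices à ∈ ℝ^{2d_A×2d_A} and B̃ ∈ ℝ^{2d_B×2d_B} by à ⊗_R B̃ := P (à ⊗ B̃) P, where P is the (suitably permuted) projector I⁽²⁾ ⊗ 1_{d_A d_B}. Then for all complex matrices A ∈ ℂ^{d_A×d_A} and B ∈ ℂ^{d_B×d_B}, Γ(A) ⊗_R Γ(B) equals, up to a permutation of tensor factors, the two-fold image I⁽²⁾ ⊗ Re(A⊗B) + J⁽²⁾ ⊗ Im(A⊗B) of the Kronecker product A ⊗ B. -/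
open Kronecker Matrix

/-- 2×2 rotation matrix J = [[0,-1],[1,0]]. -/
def Jmat : Matrix (Fin 2) (Fin 2) ℝ := !![0, -1; 1, 0]

/-- Entrywise real part of a complex matrix. -/
def reM {d : ℕ} (A : Matrix (Fin d) (Fin d) ℂ) : Matrix (Fin d) (Fin d) ℝ :=
  A.map Complex.re

/-- Entrywise imaginary part of a complex matrix. -/
def imM {d : ℕ} (A : Matrix (Fin d) (Fin d) ℂ) : Matrix (Fin d) (Fin d) ℝ :=
  A.map Complex.im

/-- The standard complex-to-real mapping Γ(A) = I ⊗ Re(A) + J ⊗ Im(A). -/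
def Gamma {d : ℕ} (A : Matrix (Fin d) (Fin d) ℂ) :
    Matrix (Fin 2 × Fin d) (Fin 2 × Fin d) ℝ :=
  (1 : Matrix (Fin 2) (Fin 2) ℝ) ⊗ₖ reM A + Jmat ⊗ₖ imM A

/-- Two-fold representation I⁽²⁾ = (1/2)(I⊗I − J⊗J). -/
noncomputable def Itwo : Matrix (Fin 2 × Fin 2) (Fin 2 × Fin 2) ℝ :=
  (1 / 2 : ℝ) • ((1 : Matrix (Fin 2) (Fin 2) ℝ) ⊗ₖ (1 : Matrix (Fin 2) (Fin 2) ℝ)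
    - Jmat ⊗ₖ Jmat)

/-- Two-fold representation J⁽²⁾ = (1/2)(I⊗J + J⊗I). -/
noncomputable def Jtwo : Matrix (Fin 2 × Fin 2) (Fin 2 × Fin 2) ℝ :=
  (1 / 2 : ℝ) • ((1 : Matrix (Fin 2) (Fin 2) ℝ) ⊗ₖ Jmat
    + Jmat ⊗ₖ (1 : Matrix (Fin 2) (Fin 2) ℝ))


/-- The projector P = (1/2)(1 − J_{d_A} ⊗ J_{d_B}) implementing I⁽²⁾ ⊗ 1 after
permutation of tensor factors. -/
noncomputable def Pproj (dA dB : ℕ) :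
    Matrix ((Fin 2 × Fin dA) × (Fin 2 × Fin dB)) ((Fin 2 × Fin dA) × (Fin 2 × Fin dB)) ℝ :=
  (1 / 2 : ℝ) •
    (1 - (Jmat ⊗ₖ (1 : Matrix (Fin dA) (Fin dA) ℝ)) ⊗ₖ
      (Jmat ⊗ₖ (1 : Matrix (Fin dB) (Fin dB) ℝ)))

/-- The R-product A ⊗_R B := P (A ⊗ B) P. -/
noncomputable def Rprod {dA dB : ℕ}
    (A : Matrix (Fin 2 × Fin dA) (Fin 2 × Fin dA) ℝ)
    (B : Matrix (Fin 2 × Fin dB) (Fin 2 × Fin dB) ℝ) :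
    Matrix ((Fin 2 × Fin dA) × (Fin 2 × Fin dB)) ((Fin 2 × Fin dA) × (Fin 2 × Fin dB)) ℝ :=
  Pproj dA dB * (A ⊗ₖ B) * Pproj dA dB

/-- The permutation of tensor factors rearranging
(2 ⊗ 2) ⊗ (d_A ⊗ d_B) into (2 ⊗ d_A) ⊗ (2 ⊗ d_B). -/
def reorder (dA dB : ℕ) :
    (Fin 2 × Fin 2) × (Fin dA × Fin dB) ≃ (Fin 2 × Fin dA) × (Fin 2 × Fin dB) where
  toFun p := ((p.1.1, p.2.1), (p.1.2, p.2.2))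
  invFun p := ((p.1.1, p.2.1), (p.1.2, p.2.2))
  left_inv p := rfl
  right_inv p := rfl

lemma Jsq : Jmat * Jmat = -1 := by
  ext i j
  fin_cases i <;> fin_cases j <;>
    simp [Jmat, Matrix.mul_apply, Fin.sum_univ_two, Matrix.one_apply]

lemma neg_kron {l m n p : Type*} (A : Matrix l m ℝ) (B : Matrix n p ℝ) :
    (-A) ⊗ₖ B = -(A ⊗ₖ B) := by
  ext ⟨i, j⟩ ⟨k, l⟩; simp [Matrix.kroneckerMap_apply]

lemma kron_neg {l m n p : Type*} (A : Matrix l m ℝ) (B : Matrix n p ℝ) :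
    A ⊗ₖ (-B) = -(A ⊗ₖ B) := by
  ext ⟨i, j⟩ ⟨k, l⟩; simp [Matrix.kroneckerMap_apply]

lemma sub_kron {l m n p : Type*} (A B : Matrix l m ℝ) (C : Matrix n p ℝ) :
    (A - B) ⊗ₖ C = A ⊗ₖ C - B ⊗ₖ C := by
  ext ⟨i, j⟩ ⟨k, l⟩; simp [Matrix.kroneckerMap_apply, sub_mul]

lemma kron_sub {l m n p : Type*} (A : Matrix l m ℝ) (B C : Matrix n p ℝ) :
    A ⊗ₖ (B - C) = A ⊗ₖ B - A ⊗ₖ C := by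
  ext ⟨i, j⟩ ⟨k, l⟩; simp [Matrix.kroneckerMap_apply, mul_sub]

lemma reorder_kron {dA dB : ℕ} (X Y : Matrix (Fin 2) (Fin 2) ℝ)
    (M : Matrix (Fin dA) (Fin dA) ℝ) (N : Matrix (Fin dB) (Fin dB) ℝ) :
    Matrix.reindex (reorder dA dB) (reorder dA dB) ((X ⊗ₖ Y) ⊗ₖ (M ⊗ₖ N)) =
      (X ⊗ₖ M) ⊗ₖ (Y ⊗ₖ N) := by
  ext ⟨⟨a, i⟩, ⟨b, j⟩⟩ ⟨⟨c, k⟩, ⟨d, l⟩⟩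
  simp [reorder, Matrix.kroneckerMap_apply]
  ring

lemma reKron {dA dB : ℕ} (A : Matrix (Fin dA) (Fin dA) ℂ) (B : Matrix (Fin dB) (Fin dB) ℂ) :
    (A ⊗ₖ B).map Complex.re = reM A ⊗ₖ reM B - imM A ⊗ₖ imM B := by
  ext ⟨i, j⟩ ⟨k, l⟩
  simp [reM, imM, Matrix.kroneckerMap_apply, Complex.mul_re]

lemma imKron {dA dB : ℕ} (A : Matrix (Fin dA) (Fin dA) ℂ) (B : Matrix (Fin dB) (Fin dB) ℂ) :
    (A ⊗ₖ B).map Complex.im = reM A ⊗ₖ imM B + imM A ⊗ₖ reM B := by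
  ext ⟨i, j⟩ ⟨k, l⟩
  simp [reM, imM, Matrix.kroneckerMap_apply, Complex.mul_im]

theorem Rprod_is_twofold_image {dA dB : ℕ}
    (A : Matrix (Fin dA) (Fin dA) ℂ) (B : Matrix (Fin dB) (Fin dB) ℂ) :
    Rprod (Gamma A) (Gamma B) =
      Matrix.reindex (reorder dA dB) (reorder dA dB)
        (Itwo ⊗ₖ ((A ⊗ₖ B).map Complex.re) + Jtwo ⊗ₖ ((A ⊗ₖ B).map Complex.im)) := by
  rw [Rprod, Pproj, Gamma, Gamma, Itwo, Jtwo, reKron, imKron]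
  simp only [Matrix.smul_kronecker, Matrix.kronecker_smul, Matrix.add_kronecker,
    Matrix.kronecker_add, sub_kron, kron_sub, neg_kron, kron_neg,
    Matrix.reindex_apply, Matrix.submatrix_add, Matrix.submatrix_sub,
    Matrix.submatrix_smul, Matrix.submatrix_neg,
    smul_mul_assoc, mul_smul_comm, sub_mul, mul_sub, add_mul, mul_add,
    neg_mul, mul_neg, neg_neg, Matrix.mul_one, Matrix.one_mul,
    Pi.add_apply, Pi.sub_apply, Pi.smul_apply, Pi.neg_apply,
    ← Matrix.mul_kronecker_mul, Jsq, smul_add, smul_sub, smul_neg]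
  have h1 : ∀ (M : Matrix (Fin dA) (Fin dA) ℝ) (N : Matrix (Fin dB) (Fin dB) ℝ)
      (X Y : Matrix (Fin 2) (Fin 2) ℝ),
      (Matrix.reindex (reorder dA dB) (reorder dA dB) ((X ⊗ₖ Y) ⊗ₖ (M ⊗ₖ N)) : _) =
        (X ⊗ₖ M) ⊗ₖ (Y ⊗ₖ N) := fun M N X Y => reorder_kron X Y M N
  simp only [Matrix.reindex_apply] at h1
  simp only [h1]
  module
end

section
/- In real quantum theory, operational independence does not imply product form: the real 4×4 matrix ρ = (1/4)(I ⊗ I − J ⊗ J) is symmetric, positive semi-definite, has trace one, satisfies tr(ρ(E ⊗ F)) = (1/2)tr(E)·(1/2)tr(F) for all symmetric real 2×2 matrices E, F, and yet ρ is not equal to σ ⊗ τ for any real 2×2 matrices σ, τ. -/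
/-!
`K = J ⊗ J` is a symmetric involution, so `(1 - K)ᵀ (1 - K) = 2 (1 - K)` and `ρ = (1 - K) / 4`
is positive semidefinite. Since `J` is antisymmetric, `tr (J E) = 0` for every symmetric `E`, so the
`J ⊗ J` part of `ρ` is invisible to product effects `E ⊗ F`. Yet `ρ` is no Kronecker product: the
entries of `σ ⊗ τ` satisfy the `2 × 2`-minor relations of a rank-one tensor, and `ρ` violates one.
-/

open Kronecker Matrix

/-- The real state ρ = (1/4)(I ⊗ I − J ⊗ J). -/
noncomputable def rhoIJ : Matrix (Fin 2 × Fin 2) (Fin 2 × Fin 2) ℝ :=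
  (1 / 4 : ℝ) • ((1 : Matrix (Fin 2) (Fin 2) ℝ) ⊗ₖ (1 : Matrix (Fin 2) (Fin 2) ℝ)
    - Jmat ⊗ₖ Jmat)

namespace Matrix

variable {R : Type*} {l m n p : Type*}

theorem neg_kronecker_neg [CommRing R] (A : Matrix l m R) (B : Matrix n p R) :
    (-A) ⊗ₖ (-B) = A ⊗ₖ B := by
  ext; simp

theorem isSymm_kronecker_of_transpose_eq_neg [CommRing R] {A : Matrix m m R} {B : Matrix n n R}
    (hA : Aᵀ = -A) (hB : Bᵀ = -B) : (A ⊗ₖ B).IsSymm := by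
  rw [IsSymm, ← kroneckerMap_transpose, hA, hB, neg_kronecker_neg]

theorem trace_mul_eq_zero_of_transpose_eq_neg [CommRing R] [NoZeroDivisors R] [CharZero R]
    [Fintype n] {A E : Matrix n n R} (hA : Aᵀ = -A) (hE : E.IsSymm) : (A * E).trace = 0 := by
  rw [← CharZero.eq_neg_self_iff]
  calc (A * E).trace = (A * E)ᵀ.trace := (trace_transpose _).symm
    _ = -(A * E).trace := by
      rw [transpose_mul, hA, hE.eq, mul_neg, trace_neg, trace_mul_comm]

theorem kronecker_apply_mul_kronecker_apply_swap [CommSemiring R] (A : Matrix l m R)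
    (B : Matrix n p R) (i i' : l) (j j' : n) (k k' : m) (q q' : p) :
    (A ⊗ₖ B) (i, j) (k, q) * (A ⊗ₖ B) (i', j') (k', q') =
      (A ⊗ₖ B) (i, j') (k, q') * (A ⊗ₖ B) (i', j) (k', q) := by
  simp only [kroneckerMap_apply]
  ring

open scoped ComplexOrder in
theorem posSemidef_one_sub_of_isHermitian_of_mul_self_eq_one {𝕜 : Type*} [RCLike 𝕜]
    [Fintype n] [DecidableEq n] {K : Matrix n n 𝕜} (hK : K.IsHermitian) (hKK : K * K = 1) :
    (1 - K).PosSemidef := by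
  have hsq : (1 - K)ᴴ * (1 - K) = (2 : ℝ) • (1 - K) := by
    rw [conjTranspose_sub, conjTranspose_one, hK.eq, sub_mul, mul_sub, mul_sub, hKK, one_mul,
      mul_one, one_mul]
    module
  have h := (posSemidef_conjTranspose_mul_self (1 - K)).smul (show (0 : ℝ) ≤ 1 / 2 by norm_num)
  rwa [hsq, smul_smul, one_div_mul_cancel two_ne_zero, one_smul] at h

end Matrix

theorem transpose_Jmat : Jmatᵀ = -Jmat := by
  ext i j; fin_cases i <;> fin_cases j <;> simp [Jmat]

theorem Jmat_mul_Jmat : Jmat * Jmat = -(1 : Matrix (Fin 2) (Fin 2) ℝ) := by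
  ext i j; fin_cases i <;> fin_cases j <;> simp [Jmat]

theorem trace_Jmat : Jmat.trace = 0 := by
  simp [Jmat, trace_fin_two]

theorem posSemidef_rhoIJ : rhoIJ.PosSemidef := by
  rw [rhoIJ, one_kronecker_one]
  refine (posSemidef_one_sub_of_isHermitian_of_mul_self_eq_one ?_ ?_).smul (by norm_num)
  · exact isHermitian_iff_isSymm.mpr
      (isSymm_kronecker_of_transpose_eq_neg transpose_Jmat transpose_Jmat)
  · rw [← mul_kronecker_mul, Jmat_mul_Jmat, neg_kronecker_neg, one_kronecker_one]

theorem isSymm_rhoIJ : rhoIJ.IsSymm :=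
  isHermitian_iff_isSymm.mp posSemidef_rhoIJ.isHermitian

theorem trace_rhoIJ : rhoIJ.trace = 1 := by
  rw [rhoIJ, trace_smul, trace_sub, trace_kronecker, trace_kronecker, trace_Jmat, trace_one]
  norm_num

theorem trace_rhoIJ_mul_kronecker {E F : Matrix (Fin 2) (Fin 2) ℝ} (hE : E.IsSymm) :
    (rhoIJ * (E ⊗ₖ F)).trace = ((1 / 2 : ℝ) * E.trace) * ((1 / 2 : ℝ) * F.trace) := by
  rw [rhoIJ, smul_mul, sub_mul, ← mul_kronecker_mul, ← mul_kronecker_mul, trace_smul, trace_sub,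
    trace_kronecker, trace_kronecker, one_mul, one_mul,
    trace_mul_eq_zero_of_transpose_eq_neg transpose_Jmat hE, zero_mul, smul_eq_mul]
  ring

theorem rhoIJ_ne_kronecker (σ τ : Matrix (Fin 2) (Fin 2) ℝ) : rhoIJ ≠ σ ⊗ₖ τ := by
  intro h
  -- `ρ (00, 00) * ρ (01, 10) = 1/16`, but `ρ (01, 00) = 0`.
  have hminor := kronecker_apply_mul_kronecker_apply_swap σ τ 0 0 0 1 0 1 0 0
  rw [← h] at hminor
  simp [rhoIJ, Jmat] at hminor

theorem RQT_operational_independence_not_product :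
    rhoIJ.IsSymm ∧ rhoIJ.PosSemidef ∧ rhoIJ.trace = 1 ∧
    (∀ E F : Matrix (Fin 2) (Fin 2) ℝ, E.IsSymm → F.IsSymm →
      (rhoIJ * (E ⊗ₖ F)).trace = ((1 / 2 : ℝ) * E.trace) * ((1 / 2 : ℝ) * F.trace)) ∧
    ¬ ∃ (σ τ : Matrix (Fin 2) (Fin 2) ℝ), rhoIJ = σ ⊗ₖ τ :=
  ⟨isSymm_rhoIJ, posSemidef_rhoIJ, trace_rhoIJ, fun _ _ hE _ => trace_rhoIJ_mul_kronecker hE,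
    fun ⟨σ, τ, h⟩ => rhoIJ_ne_kronecker σ τ h⟩
end
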